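/- Suppose M < 0, N > 0 and δ₁/K₀ > δ₂, and suppose the function y ↦ G(M,p,y) has a smallest positive zero q₁ (i.e. G(M,p,q₁) = 0 and G(M,p,y) ≠ 0 for all 0 < y < q₁). Then the transcendental equation G(M,p,y) = y + N·y³ has at least one solution ξ with 0 < ξ < q₁. -/
import Mathlib

open Real MeasureTheory Filter Set

/-- `g p y = ∫₀^y exp(−r² + p·r·y) dr`. -/
noncomputable def g (p y : ℝ) : ℝ := ∫ r in (0:ℝ)..y, Real.exp (-r^2 + p*r*y)

/-- Complementary error function `erfc z = (2/√π)∫_z^∞ exp(−r²) dr`. -/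
noncomputable def erfc (z : ℝ) : ℝ := (2 / Real.sqrt π) * ∫ r in Set.Ioi z, Real.exp (-r^2)

/-- `G₁(p,y) = exp((p−1)y²)/(K₀ + g(p,y))`. -/
noncomputable def G₁ (K₀ p y : ℝ) : ℝ := Real.exp ((p-1)*y^2) / (K₀ + g p y)

/-- `G₂(y) = exp(−γ₀²y²)/erfc(γ₀y)`. -/
noncomputable def G₂ (γ₀ y : ℝ) : ℝ := Real.exp (-(γ₀^2*y^2)) / erfc (γ₀*y)

/-- `G(M,p,y) = δ₁(1 − (A·M/B)y²)G₁(p,y) − δ₂(1 + M·y²)G₂(y)`. -/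
noncomputable def Gfun (A B δ₁ δ₂ K₀ γ₀ M p y : ℝ) : ℝ :=
  δ₁ * (1 - A*M/B * y^2) * G₁ K₀ p y - δ₂ * (1 + M*y^2) * G₂ γ₀ y

lemma gauss_integrable : Integrable (fun r : ℝ => Real.exp (-r^2)) := by
  simpa using integrable_exp_neg_mul_sq (one_pos)

lemma gauss_split (z : ℝ) : (∫ r in Set.Ioi z, Real.exp (-r^2)) =
    (∫ r in Set.Ioi (0:ℝ), Real.exp (-r^2)) - ∫ r in (0:ℝ)..z, Real.exp (-r^2) := by
  rcases le_or_gt 0 z with hz | hz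
  · rw [intervalIntegral.integral_of_le hz, ← Ioc_union_Ioi_eq_Ioi hz,
      setIntegral_union Ioc_disjoint_Ioi_same measurableSet_Ioi
        gauss_integrable.integrableOn gauss_integrable.integrableOn]
    ring
  · rw [intervalIntegral.integral_symm, intervalIntegral.integral_of_le hz.le,
      ← Ioc_union_Ioi_eq_Ioi hz.le,
      setIntegral_union Ioc_disjoint_Ioi_same measurableSet_Ioi
        gauss_integrable.integrableOn gauss_integrable.integrableOn]
    ring

lemma erfc_continuous : Continuous erfc := by
  have : Continuous fun z : ℝ => ∫ r in Set.Ioi z, Real.exp (-r^2) := by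
    have heq : (fun z : ℝ => ∫ r in Set.Ioi z, Real.exp (-r^2)) =
        fun z => (∫ r in Set.Ioi (0:ℝ), Real.exp (-r^2)) - ∫ r in (0:ℝ)..z, Real.exp (-r^2) :=
      funext gauss_split
    rw [heq]
    exact continuous_const.sub (gauss_integrable.continuous_primitive 0)
  exact continuous_const.mul this

lemma erfc_pos (z : ℝ) : 0 < erfc z := by
  have h1 : 0 < ∫ r in Set.Ioi z, Real.exp (-r^2) := by
    rw [setIntegral_pos_iff_support_of_nonneg_ae
      (Eventually.of_forall fun r => Real.exp_nonneg _) gauss_integrable.integrableOn]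
    have : Function.support (fun r : ℝ => Real.exp (-r^2)) = Set.univ := by
      ext r; simp [Function.mem_support, (Real.exp_pos _).ne']
    rw [this, Set.univ_inter]
    simp [Real.volume_Ioi]
  have h2 : (0:ℝ) < 2 / Real.sqrt π :=
    div_pos two_pos (Real.sqrt_pos.mpr Real.pi_pos)
  exact mul_pos h2 h1

lemma erfc_zero : erfc 0 = 1 := by
  have : (∫ r in Set.Ioi (0:ℝ), Real.exp (-r^2)) = Real.sqrt π / 2 := by
    have := integral_gaussian_Ioi 1
    simpa using this
  rw [erfc, this]
  field_simp

lemma g_continuous (p : ℝ) : Continuous fun y => g p y := by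
  have hf : Continuous (Function.uncurry fun (y r : ℝ) => Real.exp (-r^2 + p*r*y)) := by
    fun_prop
  have := (intervalIntegral.continuous_parametric_primitive_of_continuous (μ := volume) (a₀ := 0) hf).comp
    (continuous_id.prodMk continuous_id : Continuous fun y : ℝ => (y, y))
  exact this

lemma g_nonneg (p y : ℝ) (hy : 0 ≤ y) : 0 ≤ g p y :=
  intervalIntegral.integral_nonneg hy (fun r _ => Real.exp_nonneg _)

lemma g_zero (p : ℝ) : g p 0 = 0 := intervalIntegral.integral_same

/-- If `M < 0`, `N > 0`, `δ₁/K₀ > δ₂` and `y ↦ G(M,p,y)` has a smallest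
positive zero `q₁`, then the transcendental equation has a solution `ξ` with `0 < ξ < q₁`. -/
theorem stmt5 (A B δ₁ δ₂ K₀ γ₀ M N p q₁ : ℝ)
    (hA : 0 < A) (hB : 0 < B) (hδ₁ : 0 < δ₁) (hδ₂ : 0 < δ₂)
    (hK₀ : 0 < K₀) (hγ₀ : 0 < γ₀) (hM : M < 0) (hN : 0 < N)
    (h : δ₂ < δ₁ / K₀)
    (hq₁pos : 0 < q₁) (hq₁zero : Gfun A B δ₁ δ₂ K₀ γ₀ M p q₁ = 0)
    (hq₁min : ∀ y : ℝ, 0 < y → y < q₁ → Gfun A B δ₁ δ₂ K₀ γ₀ M p y ≠ 0) :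
    ∃ ξ : ℝ, 0 < ξ ∧ ξ < q₁ ∧ Gfun A B δ₁ δ₂ K₀ γ₀ M p ξ = ξ + N * ξ^3 := by
  set Φ : ℝ → ℝ := fun y => Gfun A B δ₁ δ₂ K₀ γ₀ M p y - (y + N * y^3) with hΦ
  have hcont : ContinuousOn Φ (Set.Icc 0 q₁) := by
    have hG1 : ContinuousOn (fun y => G₁ K₀ p y) (Set.Icc 0 q₁) := by
      apply ContinuousOn.div
      · fun_prop
      · exact (continuous_const.add (g_continuous p)).continuousOn
      · intro y hy
        have := g_nonneg p y hy.1
        positivity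
    have hG2 : Continuous (fun y => G₂ γ₀ y) := by
      apply Continuous.div
      · fun_prop
      · exact erfc_continuous.comp (continuous_const.mul continuous_id)
      · intro y; exact (erfc_pos _).ne'
    apply ContinuousOn.sub
    · unfold Gfun
      apply ContinuousOn.sub
      · exact (ContinuousOn.mul (by fun_prop) hG1)
      · exact (Continuous.mul (by fun_prop) hG2).continuousOn
    · fun_prop
  have hΦ0 : 0 < Φ 0 := by
    have : Φ 0 = δ₁ / K₀ - δ₂ := by
      simp [hΦ, Gfun, G₁, G₂, g_zero, erfc_zero]
      rw [div_eq_mul_inv]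
    rw [this]; linarith
  have hΦq : Φ q₁ < 0 := by
    have : Φ q₁ = -(q₁ + N * q₁^3) := by simp [hΦ, hq₁zero]
    rw [this]
    have : 0 < q₁ + N * q₁^3 := by positivity
    linarith
  have hmem : (0:ℝ) ∈ Set.Ioo (Φ q₁) (Φ 0) := ⟨hΦq, hΦ0⟩
  obtain ⟨ξ, hξmem, hξ⟩ := intermediate_value_Ioo' hq₁pos.le hcont hmem
  refine ⟨ξ, hξmem.1, hξmem.2, ?_⟩
  simp only [hΦ] at hξ
  linarith
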